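/- arXiv:1311.5306 — 6 statements merged into one kernel-verified Lean document; each statement's English description precedes it below -/
import Mathlib

section
/- Let A and B be abelian groups, n a positive integer, and φ : A → B a group homomorphism. If the kernel of φ is n-divisible, and the cokernel of φ is n-divisible and has no n-torsion (the only element x of coker φ with n·x = 0 is x = 0), then the quotient A/nA is isomorphic to B/nB. -/
namespace AddMonoidHom

variable {A B : Type*} [AddCommGroup A] [AddCommGroup B] (n : ℕ) (φ : A →+ B)

def quotientNsmulMap :
    A ⧸ (n • AddMonoidHom.id A).range →+ B ⧸ (n • AddMonoidHom.id B).range :=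
  QuotientAddGroup.map _ _ φ <| by
    rintro _ ⟨a, rfl⟩
    exact ⟨φ a, (map_nsmul φ n a).symm⟩

variable {n φ}

lemma mem_range_of_nsmul_mem_range (htors : ∀ x : B ⧸ φ.range, n • x = 0 → x = 0) {b : B}
    (hb : n • b ∈ φ.range) : b ∈ φ.range := by
  rw [← QuotientAddGroup.eq_zero_iff] at hb ⊢
  exact htors _ (by rwa [← QuotientAddGroup.mk_nsmul])

theorem surjective_quotientNsmulMap (hcoker : ∀ x : B ⧸ φ.range, ∃ y : B ⧸ φ.range, n • y = x) :
    Function.Surjective (quotientNsmulMap n φ) := by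
  rintro ⟨b⟩
  obtain ⟨⟨c⟩, hc⟩ := hcoker b
  -- `b ≡ n • c` modulo `φ.range`, so `b ≡ φ a` modulo `nB`.
  obtain ⟨a, ha⟩ : n • c - b ∈ φ.range :=
    QuotientAddGroup.eq_iff_sub_mem.mp ((QuotientAddGroup.mk_nsmul _ c n).trans hc)
  refine ⟨(-a : A), QuotientAddGroup.eq_iff_sub_mem.mpr ⟨-c, ?_⟩⟩
  rw [AddMonoidHom.smul_apply, AddMonoidHom.id_apply, smul_neg, map_neg, ha]
  abel

theorem injective_quotientNsmulMap (hker : ∀ x ∈ φ.ker, ∃ y ∈ φ.ker, n • y = x)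
    (htors : ∀ x : B ⧸ φ.range, n • x = 0 → x = 0) :
    Function.Injective (quotientNsmulMap n φ) := by
  rw [injective_iff_map_eq_zero]
  rintro ⟨a⟩ ha
  -- `φ a = n • b` forces `b = φ a'`; then `a - n • a'` lies in the kernel, hence in `n • ker φ`.
  obtain ⟨b, hb⟩ := (QuotientAddGroup.eq_zero_iff (φ a)).mp ha
  obtain ⟨a', ha'⟩ := mem_range_of_nsmul_mem_range htors ⟨a, hb.symm⟩
  have hdiff : a - n • a' ∈ φ.ker := by
    simp only [mem_ker, map_sub, map_nsmul, ha']
    exact sub_eq_zero.mpr hb.symm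
  obtain ⟨y, -, hy⟩ := hker _ hdiff
  refine (QuotientAddGroup.eq_zero_iff a).mpr ⟨a' + y, ?_⟩
  rw [AddMonoidHom.smul_apply, AddMonoidHom.id_apply, smul_add, hy]
  abel

end AddMonoidHom

theorem quotient_nsmul_equiv_of_divisible_ker_coker_general
    {A B : Type*} [AddCommGroup A] [AddCommGroup B] (n : ℕ) (φ : A →+ B)
    (hker : ∀ x ∈ φ.ker, ∃ y ∈ φ.ker, n • y = x)
    (hcoker : ∀ x : B ⧸ φ.range, ∃ y : B ⧸ φ.range, n • y = x)
    (htors : ∀ x : B ⧸ φ.range, n • x = 0 → x = 0) :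
    Nonempty ((A ⧸ (n • AddMonoidHom.id A).range) ≃+ (B ⧸ (n • AddMonoidHom.id B).range)) :=
  ⟨AddEquiv.ofBijective (φ.quotientNsmulMap n)
    ⟨φ.injective_quotientNsmulMap hker htors, φ.surjective_quotientNsmulMap hcoker⟩⟩

/-- If a homomorphism `φ : A → B` of abelian groups has an `n`-divisible kernel, and an
`n`-divisible cokernel with no `n`-torsion, then `A/nA ≅ B/nB`. -/
theorem quotient_nsmul_equiv_of_divisible_ker_coker
    {A B : Type*} [AddCommGroup A] [AddCommGroup B] (n : ℕ) (hn : 0 < n) (φ : A →+ B)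
    (hker : ∀ x ∈ φ.ker, ∃ y ∈ φ.ker, n • y = x)
    (hcoker : ∀ x : B ⧸ φ.range, ∃ y : B ⧸ φ.range, n • y = x)
    (htors : ∀ x : B ⧸ φ.range, n • x = 0 → x = 0) :
    Nonempty ((A ⧸ (n • AddMonoidHom.id A).range) ≃+ (B ⧸ (n • AddMonoidHom.id B).range)) :=
  quotient_nsmul_equiv_of_divisible_ker_coker_general n φ hker hcoker htors
end

section
/- The discriminant Δ of the Weierstrass curve E_{m,n} equals 2ε(m + 24n)·f_m(n), that is, Δ = 2ε(m + 24n)(62208n² + (5184m + 432ε)n + (108m² + 18εm + 1)). -/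
/-!
Substituting `A = 18(m + 24n) + ε` turns the claim into an identity in `A` alone: for `ε² = 1`
the discriminant of `y² + xy = x³ + Hx + J` collapses to `(εA³ - 1)/27`, and
since `εA³ - 1 = ε(A - ε)(A² + εA + 1)` this is `2εt(108t² + 18εt + 1)` with `t = (A - ε)/18 = m + 24n`,
and `f_m(n) = 108t² + 18εt + 1`.
-/

namespace WeierstrassCurve

lemma Δ_of_a₁_eq_one_of_a₂_a₃_eq_zero {R : Type*} [CommRing R] (a₄ a₆ : R) :
    (⟨1, 0, 0, a₄, a₆⟩ : WeierstrassCurve R).Δ =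
      a₄ ^ 2 - a₆ - 64 * a₄ ^ 3 - 432 * a₆ ^ 2 + 72 * a₄ * a₆ := by
  simp only [Δ, b₂, b₄, b₆, b₈]
  ring

end WeierstrassCurve

section

variable {K : Type*} [Field K] [CharZero K]

lemma discriminant_eq_mul_cube_sub_one_div_27 {ε : K} (hε : ε ^ 2 = 1) (A : K) :
    (⟨1, 0, 0, (1 + 8 * ε * A - 9 * A ^ 4) / 48,
        -(5 - 8 * ε * A - 24 * ε * A ^ 3 + 9 * A ^ 4 + 18 * A ^ 6) / 576⟩ :
        WeierstrassCurve K).Δ = (ε * A ^ 3 - 1) / 27 := by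
  rw [WeierstrassCurve.Δ_of_a₁_eq_one_of_a₂_a₃_eq_zero]
  linear_combination (A ^ 6 / 4 - 8 * ε * A ^ 3 / 27) * hε

lemma mul_cube_sub_one_div_27_eq {ε : K} (hε : ε ^ 2 = 1) (t : K) :
    (ε * (18 * t + ε) ^ 3 - 1) / 27 = 2 * ε * t * (108 * t ^ 2 + 18 * ε * t + 1) := by
  linear_combination (2 * ε * t + (ε ^ 2 + 1) / 27) * hε

end

/-- The discriminant of the Weierstrass curve
`E_{m,n} : y² + xy = x³ + H(m, n)x + J(m, n)` equals `2ε(m + 24n)f_m(n)`. -/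
theorem discriminant_Emn (ε m n : ℤ) (hε : ε = 1 ∨ ε = -1) (A H J : ℚ)
    (hA : A = 18 * ((m : ℚ) + 24 * n) + ε)
    (hH : H = (1 + 8 * ε * A - 9 * A ^ 4) / 48)
    (hJ : J = -(5 - 8 * ε * A - 24 * ε * A ^ 3 + 9 * A ^ 4 + 18 * A ^ 6) / 576)
    (W : WeierstrassCurve ℚ) (hW : W = ⟨1, 0, 0, H, J⟩) :
    W.Δ = 2 * ε * ((m : ℚ) + 24 * n) *
      (62208 * (n : ℚ) ^ 2 + (5184 * m + 432 * ε) * n + (108 * (m : ℚ) ^ 2 + 18 * ε * m + 1)) := by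
  have hε_sq : (ε : ℚ) ^ 2 = 1 := by rcases hε with rfl | rfl <;> norm_num
  subst hW hH hJ
  rw [discriminant_eq_mul_cube_sub_one_div_27 hε_sq, hA, mul_cube_sub_one_div_27_eq hε_sq]
  ring
end

section
/- For every ε ∈ {1, −1} and all integers m and n, setting A = 18(m + 24n) + ε and f_m(n) = 62208n² + (5184m + 432ε)n + (108m² + 18εm + 1), the integer f_m(n) divides A(9A³ − 8ε)(27A⁶ − 36εA³ + 8) − 108(m + 24n)². (Here A(9A³ − 8ε) and 27A⁶ − 36εA³ + 8 are the c₄- and c₆-invariants of the curve E_{m,n}; hence for every prime ℓ dividing f_m(n), −c₄c₆ ≡ −108(m + 24n)² (mod ℓ).) -/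
/-!
Put `k = m + 24n`, so `A = 18k + ε` and, as `ε² = 1`, `f_m(n) = 108k² + 18εk + 1`. Then
`A² + εA + 1 = 3 f_m(n)`, so modulo `f_m(n)` the residue of `A` is a root of `X² + εX + 1`,
which divides `X³ - ε`. Hence `A³ ≡ ε`, which collapses `c₄ ≡ εA` and `c₆ ≡ -1`, while
`108k² = f_m(n) - εA ≡ -εA`.
-/

section CubeRoot

variable {R : Type*} [CommRing R] {ε A : R}

theorem pow_three_eq_of_sq_add_mul_add_one_eq_zero (hε : ε ^ 2 = 1)
    (hA : A ^ 2 + ε * A + 1 = 0) : A ^ 3 = ε := by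
  linear_combination (A - ε) * hA + A * hε

theorem c4_mul_c6_eq_neg_mul_of_sq_add_mul_add_one_eq_zero (hε : ε ^ 2 = 1)
    (hA : A ^ 2 + ε * A + 1 = 0) :
    A * (9 * A ^ 3 - 8 * ε) * (27 * A ^ 6 - 36 * ε * A ^ 3 + 8) = -(ε * A) := by
  have hA3 := pow_three_eq_of_sq_add_mul_add_one_eq_zero hε hA
  have hc4 : A * (9 * A ^ 3 - 8 * ε) = ε * A := by linear_combination 9 * A * hA3
  have hc6 : 27 * A ^ 6 - 36 * ε * A ^ 3 + 8 = -1 := by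
    linear_combination (27 * A ^ 3 - 9 * ε) * hA3 - 9 * hε
  rw [hc4, hc6, mul_neg_one]

end CubeRoot

/-- `f_m(n)` divides `c₄·c₆ − 108(m + 24n)²`, where `c₄ = A(9A³ − 8ε)` and
`c₆ = 27A⁶ − 36εA³ + 8` are the invariants of `E_{m,n}` and `A = 18(m + 24n) + ε`; hence
`−c₄c₆ ≡ −108(m + 24n)² (mod ℓ)` for every prime `ℓ ∣ f_m(n)`. -/
theorem fmn_dvd_c4_mul_c6_sub (ε m n : ℤ) (hε : ε = 1 ∨ ε = -1) (A : ℤ)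
    (hA : A = 18 * (m + 24 * n) + ε) :
    (62208 * n ^ 2 + (5184 * m + 432 * ε) * n + (108 * m ^ 2 + 18 * ε * m + 1)) ∣
      (A * (9 * A ^ 3 - 8 * ε)) * (27 * A ^ 6 - 36 * ε * A ^ 3 + 8) - 108 * (m + 24 * n) ^ 2 := by
  set f := 62208 * n ^ 2 + (5184 * m + 432 * ε) * n + (108 * m ^ 2 + 18 * ε * m + 1)
  have hε2 : ε ^ 2 = 1 := by rcases hε with rfl | rfl <;> norm_num
  rw [← Int.natAbs_dvd, ← ZMod.intCast_zmod_eq_zero_iff_dvd]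
  have hf : (f : ZMod f.natAbs) = 0 := by
    rw [ZMod.intCast_zmod_eq_zero_iff_dvd, Int.natAbs_dvd]
  push_cast [f] at hf ⊢
  have hεZ : (ε : ZMod f.natAbs) ^ 2 = 1 := by
    rw [← Int.cast_pow, hε2, Int.cast_one]
  have hAZ : (A : ZMod f.natAbs) = 18 * (m + 24 * n) + ε := by
    rw [hA]; push_cast; ring
  have hroot : (A : ZMod f.natAbs) ^ 2 + ε * A + 1 = 0 := by
    linear_combination 3 * hf + (A + 18 * (m + 24 * n) + 2 * ε) * hAZ + 2 * hεZ
  rw [c4_mul_c6_eq_neg_mul_of_sq_add_mul_add_one_eq_zero hεZ hroot]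
  linear_combination -hf - hεZ - ε * hAZ
end

section
/- For every ε ∈ {1, −1} and all integers m and n: 3 divides H(m, n), and J(m, n) ≡ −2εm (mod 3). -/
/-!
Put `u = εA`. Since `ε² = 1`, `48H` and `-576J` are polynomials in `u` alone, namely
`1 + 8u - 9u⁴` and `5 - 8u - 24u³ + 9u⁴ + 18u⁶`, and `u = 1 + 18t` with `t = ε(m + 24n)`.
The first equals `9 + 144t - 9u⁴`, so `16H` is divisible by `3`. The second vanishes at
`u = 1` with derivative `64` there, so expanding at `u = 1` gives `64 · 18t` plus a multiple
of `(18t)² = 324t²`; dividing by `9` yields `64J ≡ -128t (mod 3)`, i.e. `J ≡ -2t ≡ -2εm`.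
-/

lemma three_dvd_of_mul_eq_quartic {H t : ℤ}
    (h : 48 * H = 1 + 8 * (1 + 18 * t) - 9 * (1 + 18 * t) ^ 4) : 3 ∣ H := by
  omega

lemma modEq_neg_two_mul_of_mul_eq_sextic {J t : ℤ}
    (h : 576 * J = -(5 - 8 * (1 + 18 * t) - 24 * (1 + 18 * t) ^ 3 + 9 * (1 + 18 * t) ^ 4
      + 18 * (1 + 18 * t) ^ 6)) :
    J ≡ -2 * t [ZMOD 3] := by
  have taylor : 5 - 8 * (1 + 18 * t) - 24 * (1 + 18 * t) ^ 3 + 9 * (1 + 18 * t) ^ 4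
      + 18 * (1 + 18 * t) ^ 6 = 64 * (18 * t)
        + 324 * (t ^ 2 * (252 + 372 * (18 * t) + 279 * (18 * t) ^ 2 + 108 * (18 * t) ^ 3
          + 18 * (18 * t) ^ 4)) := by
    ring
  rw [taylor] at h
  unfold Int.ModEq
  omega

/-- `3 ∣ H(m, n)` and `J(m, n) ≡ −2εm (mod 3)`. -/
theorem H_J_mod_three (ε m n : ℤ) (hε : ε = 1 ∨ ε = -1) (A H J : ℤ)
    (hA : A = 18 * (m + 24 * n) + ε)
    (hH : 48 * H = 1 + 8 * ε * A - 9 * A ^ 4)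
    (hJ : 576 * J = -(5 - 8 * ε * A - 24 * ε * A ^ 3 + 9 * A ^ 4 + 18 * A ^ 6)) :
    (3 : ℤ) ∣ H ∧ J ≡ -2 * ε * m [ZMOD 3] := by
  set t := ε * (m + 24 * n)
  have hu : ε * A = 1 + 18 * t := by
    subst hA; rcases hε with rfl | rfl <;> ring
  have hH' : 48 * H = 1 + 8 * (ε * A) - 9 * (ε * A) ^ 4 := by
    rcases hε with rfl | rfl <;> linear_combination hH
  have hJ' : 576 * J = -(5 - 8 * (ε * A) - 24 * (ε * A) ^ 3 + 9 * (ε * A) ^ 4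
      + 18 * (ε * A) ^ 6) := by
    rcases hε with rfl | rfl <;> linear_combination hJ
  rw [hu] at hH' hJ'
  refine ⟨three_dvd_of_mul_eq_quartic hH',
    (modEq_neg_two_mul_of_mul_eq_sextic hJ').trans ?_⟩
  exact Int.modEq_iff_dvd.mpr ⟨16 * ε * n, by ring⟩
end

section
/- The change of Weierstrass variables with parameters u = 2, r = 1/3 + A², s = 1, t = 0 transforms the Weierstrass curve Y² = X³ − 3A²X² + (8εA/3)X − 16/27 over ℚ (coefficients a₁ = 0, a₂ = −3A², a₃ = 0, a₄ = 8εA/3, a₆ = −16/27) into the Weierstrass curve y² + xy = x³ + H(m, n)·x + J(m, n) (coefficients a₁ = 1, a₂ = 0, a₃ = 0, a₄ = H(m, n), a₆ = J(m, n)). -/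
/-!
With `s = 1` the new `a₁` is `2s/u = 1`, and `r = 1/3 + A²` is the translation that makes the new
`a₂ = (−3A² + 3r − s²)/u²` vanish; the remaining coefficients are then polynomial identities in
`ε` and `A`, valid in any field where `2` and `3` are invertible.
-/

namespace WeierstrassCurve

variable {K : Type*} [Field K]

theorem variableChange_mk_two_third_add_sq_one_zero (h2 : (2 : K) ≠ 0) (h3 : (3 : K) ≠ 0)
    (ε A : K) :
    (⟨Units.mk0 2 h2, 1 / 3 + A ^ 2, 1, 0⟩ : VariableChange K) •
        (⟨0, -3 * A ^ 2, 0, 8 * ε * A / 3, -16 / 27⟩ : WeierstrassCurve K) =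
      ⟨1, 0, 0, (1 + 8 * ε * A - 9 * A ^ 4) / 48,
        -(5 - 8 * ε * A - 24 * ε * A ^ 3 + 9 * A ^ 4 + 18 * A ^ 6) / 576⟩ := by
  have h27 : (27 : K) ≠ 0 := by simpa [show (27 : K) = 3 ^ 3 by norm_num] using h3
  have h48 : (48 : K) ≠ 0 := by simp [show (48 : K) = 2 ^ 4 * 3 by norm_num, h2, h3]
  have h576 : (576 : K) ≠ 0 := by simp [show (576 : K) = 2 ^ 6 * 3 ^ 2 by norm_num, h2, h3]
  ext <;>
    simp only [variableChange_a₁, variableChange_a₂, variableChange_a₃, variableChange_a₄,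
      variableChange_a₆, Units.val_inv_eq_inv_val, Units.val_mk0] <;>
    field_simp <;>
    ring

end WeierstrassCurve

theorem variableChange_Emn (ε : ℤ) (A : ℤ) (H J : ℚ)
    (hH : H = (1 + 8 * ε * (A : ℚ) - 9 * (A : ℚ) ^ 4) / 48)
    (hJ : J = -(5 - 8 * ε * (A : ℚ) - 24 * ε * (A : ℚ) ^ 3 + 9 * (A : ℚ) ^ 4
      + 18 * (A : ℚ) ^ 6) / 576)
    (W : WeierstrassCurve ℚ)
    (hW : W = ⟨0, -3 * (A : ℚ) ^ 2, 0, 8 * ε * (A : ℚ) / 3, -16 / 27⟩)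
    (C : WeierstrassCurve.VariableChange ℚ)
    (hC : C = ⟨Units.mk0 2 (by norm_num), 1 / 3 + (A : ℚ) ^ 2, 1, 0⟩) :
    C • W = ⟨1, 0, 0, H, J⟩ := by
  subst hH hJ hW hC
  exact WeierstrassCurve.variableChange_mk_two_third_add_sq_one_zero two_ne_zero three_ne_zero _ _
end

section
/- For every ε ∈ {1, −1} and all integers m and n, the discriminant Δ of the Weierstrass curve E_{m,n} satisfies Δ ≡ 2εm (mod 3). In particular, if 3 does not divide m, then 3 does not divide Δ, so E_{m,n} has good reduction at 3. -/
/-!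
Reducing the Weierstrass coefficients modulo 3 kills `a₄ = H`, because the choice
`A = 18 M + ε` makes `48 H = 9 (1 - A⁴) + 144 ε M`. The discriminant of
`y² + xy = x³ + a₄x + a₆` is then `-a₆` modulo 3, and `J ≡ ε M ≡ ε m`, hence `Δ ≡ -ε m ≡ 2 ε m`.
-/

namespace WeierstrassCurve

lemma Δ_mk_one_zero_zero {R : Type*} [CommRing R] (a₄ a₆ : R) :
    (⟨1, 0, 0, a₄, a₆⟩ : WeierstrassCurve R).Δ
      = -a₆ + a₄ ^ 2 - 64 * a₄ ^ 3 - 432 * a₆ ^ 2 + 72 * a₄ * a₆ := by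
  simp only [Δ, b₂, b₄, b₆, b₈]
  ring

lemma Δ_mk_one_zero_zero_modEq_three {a₄ : ℤ} (a₆ : ℤ) (h : 3 ∣ a₄) :
    (⟨1, 0, 0, a₄, a₆⟩ : WeierstrassCurve ℤ).Δ ≡ -a₆ [ZMOD 3] := by
  obtain ⟨k, rfl⟩ := h
  rw [Δ_mk_one_zero_zero, Int.modEq_iff_dvd]
  exact ⟨-3 * k ^ 2 + 576 * k ^ 3 + 144 * a₆ ^ 2 - 72 * k * a₆, by ring⟩

end WeierstrassCurve

section

variable {ε M A : ℤ}

lemma three_dvd_of_forty_eight_mul_eq (hε : ε = 1 ∨ ε = -1) (hA : A = 18 * M + ε) {H : ℤ}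
    (hH : 48 * H = 1 + 8 * ε * A - 9 * A ^ 4) : 3 ∣ H := by
  have hε2 : ε ^ 2 = 1 := by rcases hε with rfl | rfl <;> norm_num
  have h48 : 48 * H = 9 * (1 - A ^ 4) + 144 * (ε * M) := by
    rw [hH, hA]; linear_combination 8 * hε2
  generalize 1 - A ^ 4 = X at h48
  generalize ε * M = Y at h48
  omega

lemma modEq_of_five_hundred_seventy_six_mul_eq (hε : ε = 1 ∨ ε = -1) (hA : A = 18 * M + ε)
    {J : ℤ} (hJ : 576 * J = -(5 - 8 * ε * A - 24 * ε * A ^ 3 + 9 * A ^ 4 + 18 * A ^ 6)) :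
    J ≡ ε * M [ZMOD 3] := by
  set t := 18 * M
  -- With `ε² = 1`, `576 J = -64 ε t - t² (252 + 372 ε t + ⋯)`, and `t² = 324 M²`.
  have h64 : 64 * J + 128 * (ε * M)
      = 3 * (-12 * M ^ 2 * (252 + 372 * ε * t + 279 * t ^ 2 + 108 * ε * t ^ 3 + 18 * t ^ 4)) := by
    refine mul_left_cancel₀ (by norm_num : (9 : ℤ) ≠ 0) ?_
    rw [hA] at hJ
    rcases hε with rfl | rfl <;> linear_combination hJ
  rw [Int.modEq_iff_dvd]
  generalize ε * M = Y at h64 ⊢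
  omega

end

/-- The discriminant of `E_{m,n}` satisfies `Δ ≡ 2εm (mod 3)`; in particular if `3 ∤ m` then
`3 ∤ Δ`, so `E_{m,n}` has good reduction at `3`. -/
theorem discriminant_Emn_mod_three (ε m n : ℤ) (hε : ε = 1 ∨ ε = -1) (A H J : ℤ)
    (hA : A = 18 * (m + 24 * n) + ε)
    (hH : 48 * H = 1 + 8 * ε * A - 9 * A ^ 4)
    (hJ : 576 * J = -(5 - 8 * ε * A - 24 * ε * A ^ 3 + 9 * A ^ 4 + 18 * A ^ 6))
    (W : WeierstrassCurve ℤ) (hW : W = ⟨1, 0, 0, H, J⟩) :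
    W.Δ ≡ 2 * ε * m [ZMOD 3] ∧ (¬ (3 : ℤ) ∣ m → ¬ (3 : ℤ) ∣ W.Δ) := by
  have hΔ : W.Δ ≡ -J [ZMOD 3] :=
    hW ▸ WeierstrassCurve.Δ_mk_one_zero_zero_modEq_three J
      (three_dvd_of_forty_eight_mul_eq hε hA hH)
  have hJ3 : J ≡ ε * (m + 24 * n) [ZMOD 3] := modEq_of_five_hundred_seventy_six_mul_eq hε hA hJ
  have hmain : W.Δ ≡ 2 * ε * m [ZMOD 3] := by
    refine hΔ.trans ?_
    rw [Int.modEq_iff_dvd] at hJ3 ⊢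
    rcases hε with rfl | rfl <;> omega
  refine ⟨hmain, fun hm hdvd => hm ?_⟩
  have h2εm : 3 ∣ 2 * ε * m := hmain.dvd_iff.mp hdvd
  rcases hε with rfl | rfl <;> omega
end
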